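/- Let Z be a uniform NROBP computing φ(G) for a graph G of matching width at least t. Then every root-leaf path of Z contains a t-node; i.e., the set of t-nodes forms a root-leaf cut of Z. -/

import Mathlib

open SimpleGraph

/-- There is a matching of size `t` in `G` all of whose edges have one end in `A` and the
other end outside `A`. -/
def HasCutMatching {V : Type} (G : SimpleGraph V) (A : Set V) (t : ℕ) : Prop :=
  ∃ a b : Fin t → V, Function.Injective a ∧ Function.Injective b ∧
    ∀ i, a i ∈ A ∧ b i ∉ A ∧ G.Adj (a i) (b i)

/-- The matching width of `G`: the minimum over all permutations (orderings) of `V(G)` of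
the maximum, over all prefixes, of the size of a largest matching consisting of edges
between the prefix and the rest of the vertices. -/
noncomputable def matchingWidth {V : Type} [Fintype V] (G : SimpleGraph V) : ℕ :=
  ⨅ σ : Fin (Fintype.card V) ≃ V, ⨆ i : Fin (Fintype.card V + 1),
    sSup {t | HasCutMatching G {v | ((σ.symm v : Fin (Fintype.card V)) : ℕ) < (i : ℕ)} t}

/-- A non-deterministic read-once branching program over variables `V`: a directed graph
(with possible multiple edges) with one root and one leaf, where some edges are labelled
by literals (a variable together with a sign). -/
structure NROBP (V : Type) where
  node : Type
  edge : Type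
  src : edge → node
  dst : edge → node
  label : edge → Option (V × Bool)
  root : node
  leaf : node

namespace NROBP

variable {V : Type}

/-- A directed path in the underlying graph of `Z`. -/
structure DiPath (Z : NROBP V) where
  len : ℕ
  verts : Fin (len + 1) → Z.node
  edges : Fin len → Z.edge
  srcOK : ∀ i : Fin len, Z.src (edges i) = verts i.castSucc
  dstOK : ∀ i : Fin len, Z.dst (edges i) = verts i.succ

variable {Z : NROBP V}

/-- The first vertex of a directed path. -/
def DiPath.start (P : Z.DiPath) : Z.node := P.verts 0

/-- The last vertex of a directed path. -/
def DiPath.finish (P : Z.DiPath) : Z.node := P.verts (Fin.last P.len)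

/-- The set `A(P)` of literals labelling the edges of a path `P`. -/
def DiPath.labels (P : Z.DiPath) : Set (V × Bool) :=
  {l | ∃ i : Fin P.len, Z.label (P.edges i) = some l}

/-- The set of variables whose literals label edges of `P`. -/
def DiPath.vars (P : Z.DiPath) : Set V := {v | ∃ b : Bool, (v, b) ∈ P.labels}

/-- `P` is a root-leaf path. -/
def DiPath.IsRootLeaf (P : Z.DiPath) : Prop := P.start = Z.root ∧ P.finish = Z.leaf

/-- `P` passes through the node `a`. -/
def DiPath.passes (P : Z.DiPath) (a : Z.node) : Prop := ∃ i, P.verts i = a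

/-- The set of variables occurring positively on `P`. -/
def posSet (Z : NROBP V) (P : Z.DiPath) : Set V := {v | (v, true) ∈ P.labels}

/-- `Z` is (syntactically) read-once: no directed path has two edges labelled with
literals of the same variable. -/
def ReadOnce (Z : NROBP V) : Prop :=
  ∀ P : Z.DiPath, ∀ i j : Fin P.len, ∀ (v : V) (b b' : Bool),
    Z.label (P.edges i) = some (v, b) → Z.label (P.edges j) = some (v, b') → i = j

/-- `Z` is acyclic (a DAG): no nontrivial directed path returns to its start. -/
def Acyclic (Z : NROBP V) : Prop :=
  ∀ P : Z.DiPath, 0 < P.len → P.start ≠ P.finish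

/-- `Z` is uniform: any two paths from the root to the same node read the same set of
variables, and every root-leaf path reads all the variables. -/
def Uniform (Z : NROBP V) : Prop :=
  (∀ P Q : Z.DiPath, P.start = Z.root → Q.start = Z.root → P.finish = Q.finish →
    P.vars = Q.vars) ∧
  (∀ P : Z.DiPath, P.IsRootLeaf → P.vars = Set.univ)

/-- `Z` computes the Boolean function (satisfaction predicate) `F`: the satisfying
assignments of `F` are exactly the total assignments extending the literal set `A(P)` of
some root-leaf path `P`. -/
def Computes (Z : NROBP V) (F : (V → Bool) → Prop) : Prop :=
  ∀ S : V → Bool,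
    F S ↔ ∃ P : Z.DiPath, P.IsRootLeaf ∧ ∀ (v : V) (b : Bool), (v, b) ∈ P.labels → S v = b

/-- `a` is a `t`-node of `Z`: there is a set `S(a)` of at least `t` variables contained
in `VC(P)` (the positively occurring variables) for every root-leaf path `P` through
`a`. -/
def IsTNode (Z : NROBP V) (t : ℕ) (a : Z.node) : Prop :=
  ∃ Sa : Set V, t ≤ Sa.ncard ∧
    ∀ P : Z.DiPath, P.IsRootLeaf → P.passes a → Sa ⊆ Z.posSet P

end NROBP

/-- A truth assignment `S` satisfies the monotone 2-CNF `φ(G)`, whose clauses are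
`(u ∨ v)` for the edges `{u,v}` of `G`. -/
def PhiSat {V : Type} (G : SimpleGraph V) (S : V → Bool) : Prop :=
  ∀ ⦃u v : V⦄, G.Adj u v → (S u = true ∨ S v = true)

/-! Fix a root-leaf path `P`. Being uniform and read-once, `Z` makes `P` read every variable
exactly once, so `P` orders the variables, and matching width at least `t` yields a prefix `A` of
this order with `t` matching edges leaving `A`. Let `c` be the node of `P` at which `A` has just
been read; by uniformity every path from the root to `c` reads exactly `A`. For a matching edge
`uw` with `u ∈ A`, if some root-leaf path through `c` leaves `u` unset, then splicing its prefix
with the suffix of any root-leaf path `Q` through `c` gives a root-leaf path whose positive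
variables cover `uw`; as `u` can be set neither on that prefix nor on a suffix after `A`, and `w`
is not read before `c`, the variable `w` is set on `Q`. Picking `u` or `w` accordingly for each
matching edge gives `t` variables set on every root-leaf path through `c`. -/

lemma HasCutMatching.mono {V : Type} {G : SimpleGraph V} {A : Set V} {s t : ℕ}
    (h : HasCutMatching G A s) (hts : t ≤ s) : HasCutMatching G A t := by
  obtain ⟨a, b, ha, hb, hab⟩ := h
  exact ⟨a ∘ Fin.castLE hts, b ∘ Fin.castLE hts, ha.comp (Fin.castLE_injective hts),
    hb.comp (Fin.castLE_injective hts), fun i => hab _⟩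

lemma HasCutMatching.le_card {V : Type} [Fintype V] {G : SimpleGraph V} {A : Set V} {s : ℕ}
    (h : HasCutMatching G A s) : s ≤ Fintype.card V := by
  obtain ⟨a, -, ha, -⟩ := h
  simpa using Fintype.card_le_of_injective a ha

lemma hasCutMatching_zero {V : Type} (G : SimpleGraph V) (A : Set V) : HasCutMatching G A 0 :=
  ⟨Fin.elim0, Fin.elim0, fun i => i.elim0, fun i => i.elim0, fun i => i.elim0⟩

lemma exists_prefix_hasCutMatching_of_le_matchingWidth {V : Type} [Fintype V]
    {G : SimpleGraph V} {t : ℕ} (hmw : t ≤ matchingWidth G) (σ : Fin (Fintype.card V) ≃ V) :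
    ∃ i : Fin (Fintype.card V + 1),
      HasCutMatching G {v | ((σ.symm v : Fin (Fintype.card V)) : ℕ) < (i : ℕ)} t := by
  set g : Fin (Fintype.card V + 1) → ℕ := fun i =>
    sSup {s | HasCutMatching G {v | ((σ.symm v : Fin (Fintype.card V)) : ℕ) < (i : ℕ)} s}
  obtain ⟨i, hi⟩ := exists_eq_ciSup_of_finite (f := g)
  have hg : t ≤ g i := hi ▸ hmw.trans (ciInf_le (OrderBot.bddBelow _) σ)
  have hmem : HasCutMatching G {v | ((σ.symm v : Fin (Fintype.card V)) : ℕ) < (i : ℕ)} (g i) :=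
    Nat.sSup_mem ⟨0, hasCutMatching_zero G _⟩
      ⟨Fintype.card V, fun _ hs => HasCutMatching.le_card hs⟩
  exact ⟨i, hmem.mono hg⟩

lemma exists_threshold_hasCutMatching_of_le_matchingWidth {V : Type} [Fintype V]
    {G : SimpleGraph V} {t n : ℕ} (hmw : t ≤ matchingWidth G) {f : V → Fin n}
    (hf : Function.Injective f) :
    ∃ m ≤ n, HasCutMatching G {v | (f v : ℕ) < m} t := by
  let _ : LinearOrder V := LinearOrder.lift' f hf
  let σ : Fin (Fintype.card V) ≃o V := monoEquivOfFin V rfl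
  obtain ⟨i, hi⟩ := exists_prefix_hasCutMatching_of_le_matchingWidth hmw σ.toEquiv
  by_cases hin : (i : ℕ) < Fintype.card V
  · refine ⟨f (σ ⟨i, hin⟩), (f _).2.le, ?_⟩
    convert hi using 1
    ext v
    exact (σ.symm_apply_lt (x := ⟨i, hin⟩) (y := v)).symm
  · refine ⟨n, le_rfl, ?_⟩
    convert hi using 1
    ext v
    exact iff_of_true (f v).2 ((σ.symm v).2.trans_le (not_lt.mp hin))

namespace NROBP

variable {V : Type} {Z : NROBP V}

namespace DiPath

lemma verts_congr (P : Z.DiPath) {i j : Fin (P.len + 1)} (h : (i : ℕ) = j) :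
    P.verts i = P.verts j :=
  congrArg P.verts (Fin.ext h)

lemma mem_labels_iff (P : Z.DiPath) {l : V × Bool} :
    l ∈ P.labels ↔ ∃ i : Fin P.len, Z.label (P.edges i) = some l := Iff.rfl

def take (P : Z.DiPath) (k : ℕ) (hk : k ≤ P.len) : Z.DiPath where
  len := k
  verts i := P.verts ⟨i, by omega⟩
  edges i := P.edges ⟨i, by omega⟩
  srcOK i := P.srcOK ⟨i, by omega⟩
  dstOK i := P.dstOK ⟨i, by omega⟩

def drop (P : Z.DiPath) (k : ℕ) (hk : k ≤ P.len) : Z.DiPath where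
  len := P.len - k
  verts i := P.verts ⟨k + i, by omega⟩
  edges i := P.edges ⟨k + i, by omega⟩
  srcOK i := P.srcOK ⟨k + i, by omega⟩
  dstOK i := P.dstOK ⟨k + i, by omega⟩

def append (P Q : Z.DiPath) (h : P.finish = Q.start) : Z.DiPath where
  len := P.len + Q.len
  verts i := if hi : i.1 ≤ P.len then P.verts ⟨i, by omega⟩ else Q.verts ⟨i - P.len, by omega⟩
  edges i := if hi : i.1 < P.len then P.edges ⟨i, hi⟩ else Q.edges ⟨i - P.len, by omega⟩
  srcOK i := by
    by_cases hi : i.1 < P.len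
    · rw [dif_pos hi, dif_pos (by simp; omega)]
      exact P.srcOK ⟨i, hi⟩
    · rw [dif_neg hi, Q.srcOK]
      by_cases he : i.1 = P.len
      · rw [dif_pos (by simp; omega)]
        calc Q.verts ⟨i - P.len, _⟩ = Q.start := Q.verts_congr (by simp [he])
          _ = P.finish := h.symm
          _ = _ := P.verts_congr (by simp [he])
      · rw [dif_neg (by simp; omega)]
        exact Q.verts_congr (by simp)
  dstOK i := by
    by_cases hi : i.1 < P.len
    · rw [dif_pos hi, dif_pos (by simp; omega)]
      exact P.dstOK ⟨i, hi⟩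
    · rw [dif_neg hi, dif_neg (by simp; omega), Q.dstOK]
      exact Q.verts_congr (by simp; omega)

section TakeDrop

variable (P : Z.DiPath) (k : ℕ) (hk : k ≤ P.len)

lemma take_start : (P.take k hk).start = P.start := P.verts_congr rfl

lemma take_finish : (P.take k hk).finish = P.verts ⟨k, by omega⟩ := P.verts_congr rfl

lemma drop_start : (P.drop k hk).start = P.verts ⟨k, by omega⟩ := P.verts_congr rfl

lemma drop_finish : (P.drop k hk).finish = P.finish :=
  P.verts_congr (show k + (P.len - k) = P.len by omega)

lemma mem_take_labels_iff {l : V × Bool} :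
    l ∈ (P.take k hk).labels ↔ ∃ i : Fin P.len, (i : ℕ) < k ∧ Z.label (P.edges i) = some l :=
  ⟨fun ⟨i, hi⟩ => ⟨⟨i, i.2.trans_le hk⟩, i.2, hi⟩, fun ⟨i, hik, hi⟩ => ⟨⟨i, hik⟩, hi⟩⟩

lemma mem_drop_labels_iff {l : V × Bool} :
    l ∈ (P.drop k hk).labels ↔ ∃ i : Fin P.len, k ≤ (i : ℕ) ∧ Z.label (P.edges i) = some l := by
  constructor
  · rintro ⟨i, hi⟩
    exact ⟨⟨k + i, by have : (i : ℕ) < P.len - k := i.2; omega⟩, by simp, hi⟩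
  · rintro ⟨i, hki, hi⟩
    refine ⟨⟨i - k, show (i : ℕ) - k < P.len - k by omega⟩, ?_⟩
    simpa only [drop, Nat.add_sub_cancel' hki] using hi

lemma labels_eq_take_union_drop : P.labels = (P.take k hk).labels ∪ (P.drop k hk).labels := by
  ext l
  rw [Set.mem_union, mem_take_labels_iff, mem_drop_labels_iff, mem_labels_iff]
  constructor
  · rintro ⟨i, hi⟩
    exact (lt_or_ge (i : ℕ) k).imp (fun h => ⟨i, h, hi⟩) (fun h => ⟨i, h, hi⟩)
  · rintro (⟨i, -, hi⟩ | ⟨i, -, hi⟩) <;> exact ⟨i, hi⟩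

end TakeDrop

section Append

variable (P Q : Z.DiPath) (h : P.finish = Q.start)

lemma append_start : (P.append Q h).start = P.start := by
  simp only [start, append]
  exact dif_pos (Nat.zero_le _)

lemma append_finish : (P.append Q h).finish = Q.finish := by
  simp only [finish, append]
  by_cases hQ : Q.len = 0
  · rw [dif_pos (by simp [hQ])]
    calc P.verts _ = P.finish := P.verts_congr (by simp [hQ])
      _ = Q.start := h
      _ = Q.finish := Q.verts_congr (by simp [hQ])
  · rw [dif_neg (by simp; omega)]
    exact Q.verts_congr (by simp)

lemma append_labels : (P.append Q h).labels = P.labels ∪ Q.labels := by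
  ext l
  rw [Set.mem_union]
  constructor
  · rintro ⟨i, hi⟩
    change Z.label (dite _ _ _) = _ at hi
    split_ifs at hi
    exacts [Or.inl ⟨_, hi⟩, Or.inr ⟨_, hi⟩]
  · rintro (⟨i, hi⟩ | ⟨i, hi⟩)
    · refine ⟨⟨i, by simp [append]; omega⟩, ?_⟩
      change Z.label (dite _ _ _) = _
      rwa [dif_pos i.2]
    · refine ⟨⟨P.len + i, by simp [append]⟩, ?_⟩
      change Z.label (dite _ _ _) = _
      rw [dif_neg (by simp)]
      simpa using hi

end Append

end DiPath

lemma ReadOnce.eq_of_mem_labels (hRO : Z.ReadOnce) {P : Z.DiPath} {v : V} {b b' : Bool}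
    (h : (v, b) ∈ P.labels) (h' : (v, b') ∈ P.labels) : b = b' := by
  obtain ⟨i, hi⟩ := h
  obtain ⟨j, hj⟩ := h'
  rw [hRO P i j v b b' hi hj, hj] at hi
  simpa using hi.symm

lemma ReadOnce.exists_split_of_passes (hRO : Z.ReadOnce) {P : Z.DiPath} {c : Z.node}
    (hc : P.passes c) :
    ∃ P₁ P₂ : Z.DiPath, P₁.start = P.start ∧ P₁.finish = c ∧ P₂.start = c ∧
      P₂.finish = P.finish ∧ P.labels = P₁.labels ∪ P₂.labels ∧ Disjoint P₁.vars P₂.vars := by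
  obtain ⟨k, rfl⟩ := hc
  have hk : (k : ℕ) ≤ P.len := Nat.lt_succ_iff.mp k.2
  refine ⟨P.take k hk, P.drop k hk, P.take_start k hk, P.take_finish k hk, P.drop_start k hk,
    P.drop_finish k hk, P.labels_eq_take_union_drop k hk, ?_⟩
  rw [Set.disjoint_left]
  rintro v ⟨b, hb⟩ ⟨b', hb'⟩
  obtain ⟨i, hik, hi⟩ := (P.mem_take_labels_iff k hk).mp hb
  obtain ⟨j, hkj, hj⟩ := (P.mem_drop_labels_iff k hk).mp hb'
  have := hRO P i j v b b' hi hj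
  omega

variable {G : SimpleGraph V}

lemma ReadOnce.mem_posSet_or_mem_posSet_of_adj (hRO : Z.ReadOnce) (hC : Z.Computes (PhiSat G))
    {P : Z.DiPath} (hP : P.IsRootLeaf) {u w : V} (huw : G.Adj u w) :
    u ∈ Z.posSet P ∨ w ∈ Z.posSet P := by
  classical
  have hS : PhiSat G (fun v => decide ((v, true) ∈ P.labels)) := by
    refine (hC _).mpr ⟨P, hP, fun v b hvb => ?_⟩
    cases b
    · exact decide_eq_false fun hv => Bool.noConfusion (hRO.eq_of_mem_labels hv hvb)
    · exact decide_eq_true hvb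
  simpa [posSet] using hS huw

lemma ReadOnce.forall_mem_posSet_or_forall_mem_posSet (hRO : Z.ReadOnce)
    (hC : Z.Computes (PhiSat G)) {c : Z.node} {A : Set V}
    (hA : ∀ Q : Z.DiPath, Q.start = Z.root → Q.finish = c → Q.vars = A)
    {u w : V} (hu : u ∈ A) (hw : w ∉ A) (huw : G.Adj u w) :
    (∀ P : Z.DiPath, P.IsRootLeaf → P.passes c → u ∈ Z.posSet P) ∨
      (∀ P : Z.DiPath, P.IsRootLeaf → P.passes c → w ∈ Z.posSet P) := by
  refine or_iff_not_imp_left.mpr fun hnot P hP hcP => ?_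
  push Not at hnot
  obtain ⟨P₀, hP₀, hcP₀, huP₀⟩ := hnot
  obtain ⟨P₀₁, _, hs₀₁, hf₀₁, -, -, hlab₀, -⟩ := hRO.exists_split_of_passes hcP₀
  obtain ⟨P₁, P₂, hs₁, hf₁, hs₂, hf₂, hlab, hdisj⟩ := hRO.exists_split_of_passes hcP
  have hsplice : (P₀₁.append P₂ (hf₀₁.trans hs₂.symm)).IsRootLeaf :=
    ⟨(P₀₁.append_start _ _).trans (hs₀₁.trans hP₀.1),
      (P₀₁.append_finish _ _).trans (hf₂.trans hP.2)⟩
  have hA₀₁ : P₀₁.vars = A := hA P₀₁ (hs₀₁.trans hP₀.1) hf₀₁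
  have hA₁ : P₁.vars = A := hA P₁ (hs₁.trans hP.1) hf₁
  rcases hRO.mem_posSet_or_mem_posSet_of_adj hC hsplice huw with hu' | hw'
  · exfalso
    rcases (P₀₁.append_labels _ _ ▸ hu' : (u, true) ∈ P₀₁.labels ∪ P₂.labels) with h | h
    · exact huP₀ (show (u, true) ∈ P₀.labels from hlab₀ ▸ Or.inl h)
    · exact Set.disjoint_left.mp hdisj (hA₁ ▸ hu) ⟨true, h⟩
  · rcases (P₀₁.append_labels _ _ ▸ hw' : (w, true) ∈ P₀₁.labels ∪ P₂.labels) with h | h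
    · exact absurd (hA₀₁ ▸ ⟨true, h⟩) hw
    · exact show (w, true) ∈ P.labels from hlab ▸ Or.inr h

lemma ReadOnce.isTNode_of_hasCutMatching (hRO : Z.ReadOnce) (hC : Z.Computes (PhiSat G))
    {c : Z.node} {A : Set V} (hA : ∀ Q : Z.DiPath, Q.start = Z.root → Q.finish = c → Q.vars = A)
    {t : ℕ} (hM : HasCutMatching G A t) : Z.IsTNode t c := by
  obtain ⟨a, b, ha, hb, hab⟩ := hM
  have hchoice : ∀ i, ∃ x, (x = a i ∨ x = b i) ∧
      ∀ P : Z.DiPath, P.IsRootLeaf → P.passes c → x ∈ Z.posSet P := fun i =>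
    (hRO.forall_mem_posSet_or_forall_mem_posSet hC hA (hab i).1 (hab i).2.1 (hab i).2.2).elim
      (fun h => ⟨a i, Or.inl rfl, h⟩) (fun h => ⟨b i, Or.inr rfl, h⟩)
  choose x hx hxP using hchoice
  have hinj : Function.Injective x := by
    intro i j hij
    rcases hx i with hi | hi <;> rcases hx j with hj | hj <;> rw [hi, hj] at hij
    · exact ha hij
    · exact absurd (hij ▸ (hab i).1) (hab j).2.1
    · exact absurd (hij ▸ (hab j).1) (hab i).2.1
    · exact hb hij
  refine ⟨Set.range x, by simp [Set.ncard_range_of_injective hinj], ?_⟩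
  rintro P hP hcP _ ⟨i, rfl⟩
  exact hxP i P hP hcP

lemma ReadOnce.vars_take_eq (hRO : Z.ReadOnce) {P : Z.DiPath} {f : V → Fin P.len}
    (hf : ∀ v, ∃ b, Z.label (P.edges (f v)) = some (v, b)) (k : ℕ) (hk : k ≤ P.len) :
    (P.take k hk).vars = {v | (f v : ℕ) < k} := by
  ext v
  simp only [DiPath.vars, DiPath.mem_take_labels_iff, Set.mem_ofPred_eq]
  constructor
  · rintro ⟨b, i, hik, hi⟩
    obtain ⟨b', hb'⟩ := hf v
    rwa [← hRO P i (f v) v b b' hi hb']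
  · intro hv
    obtain ⟨b, hb⟩ := hf v
    exact ⟨b, f v, hv, hb⟩

end NROBP

theorem tnodes_form_cut_general {V : Type} [Fintype V] (G : SimpleGraph V) (t : ℕ)
    (Z : NROBP V) (hRO : Z.ReadOnce) (hU : Z.Uniform)
    (hC : Z.Computes (PhiSat G)) (hmw : t ≤ matchingWidth G) :
    ∀ P : Z.DiPath, P.IsRootLeaf → ∃ a : Z.node, P.passes a ∧ Z.IsTNode t a := by
  intro P hP
  have hread : ∀ v, ∃ i : Fin P.len, ∃ b, Z.label (P.edges i) = some (v, b) := fun v => by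
    obtain ⟨b, i, hi⟩ := (hU.2 P hP).symm ▸ Set.mem_univ v
    exact ⟨i, b, hi⟩
  choose f hf using hread
  have hf_inj : Function.Injective f := fun u v huv => by
    obtain ⟨b, hb⟩ := hf u
    obtain ⟨b', hb'⟩ := hf v
    rw [huv, hb'] at hb
    exact (Prod.mk.inj (Option.some_inj.mp hb)).1.symm
  obtain ⟨m, hm, hM⟩ := exists_threshold_hasCutMatching_of_le_matchingWidth hmw hf_inj
  refine ⟨P.verts ⟨m, by omega⟩, ⟨_, rfl⟩,
    hRO.isTNode_of_hasCutMatching hC (fun Q hQs hQf => ?_) hM⟩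
  rw [← hRO.vars_take_eq hf m hm]
  exact hU.1 Q (P.take m hm) hQs ((P.take_start m hm).trans hP.1)
    (hQf.trans (P.take_finish m hm).symm)

/-- If `Z` is a uniform NROBP computing `φ(G)` for a graph `G` of matching width at least
`t`, then every root-leaf path of `Z` contains a `t`-node; i.e., the `t`-nodes form a
root-leaf cut of `Z`. -/
theorem tnodes_form_cut {V : Type} [Fintype V] (G : SimpleGraph V) (t : ℕ)
    (Z : NROBP V) (hRO : Z.ReadOnce) (hAc : Z.Acyclic) (hU : Z.Uniform)
    (hC : Z.Computes (PhiSat G)) (hmw : t ≤ matchingWidth G) :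
    ∀ P : Z.DiPath, P.IsRootLeaf → ∃ a : Z.node, P.passes a ∧ Z.IsTNode t a :=
  tnodes_form_cut_general G t Z hRO hU hC hmw
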